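/- Let T > 0, M > 0, N ∈ ℕ₊, τ = T/N. For k = 0,…,N−1 let Ã_k ∈ ℝ^{n×n} with ‖Ã_k‖ ≤ M, let B̃ ∈ ℝ^{n×m} with ‖B̃‖ ≤ M, let R̃_k ∈ ℝ^{m×m} be symmetric positive definite with ‖R̃_k⁻¹‖ ≤ M, and let Π_1,…,Π_N ∈ ℝ^{n×n} be symmetric positive semidefinite with ‖Π_k‖ ≤ M. For l ∈ {0,…,N−1} and x_l ∈ ℝⁿ, define for k = l,…,N−1: u_k = −( R̃_k + τB̃ᵀΠ_{k+1}B̃ )⁻¹ B̃ᵀΠ_{k+1}(I + τÃ_k) x_k and x_{k+1} = (I + τÃ_k)x_k + τB̃u_k. Then there exists a constant C depending only on M and T (in particular independent of l, N and x_l) such that max_{k=l,…,N} ‖x_k‖ + max_{k=l,…,N−1} ‖u_k‖ ≤ C‖x_l‖. -/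

import Mathlib

open Matrix

/-- The spectral norm of a real matrix: the operator norm induced by the Euclidean norms. -/
noncomputable def sNorm {p q : ℕ} (M : Matrix (Fin p) (Fin q) ℝ) : ℝ :=
  ‖LinearMap.toContinuousLinearMap (Matrix.toEuclideanLin M)‖

/-- The Euclidean norm of a real vector. -/
noncomputable def eNorm {p : ℕ} (v : Fin p → ℝ) : ℝ :=
  ‖(WithLp.equiv 2 (Fin p → ℝ)).symm v‖

open scoped Matrix.Norms.L2Operator

noncomputable def Matrix.PosSemidef.sqrt {q : ℕ} {S : Matrix (Fin q) (Fin q) ℝ} (_hS : S.PosSemidef) :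
    Matrix (Fin q) (Fin q) ℝ :=
  open scoped MatrixOrder in CFC.sqrt S

open scoped MatrixOrder in
lemma Matrix.PosSemidef.posSemidef_sqrt {q : ℕ} {S : Matrix (Fin q) (Fin q) ℝ} (hS : S.PosSemidef) :
    hS.sqrt.PosSemidef :=
  (CFC.sqrt_nonneg S).posSemidef

open scoped MatrixOrder in
lemma Matrix.PosSemidef.sqrt_mul_self {q : ℕ} {S : Matrix (Fin q) (Fin q) ℝ} (hS : S.PosSemidef) :
    hS.sqrt * hS.sqrt = S :=
  CFC.sqrt_mul_sqrt_self S hS.nonneg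

lemma sNorm_eq {p q : ℕ} (A : Matrix (Fin p) (Fin q) ℝ) : sNorm A = ‖A‖ := rfl

lemma eNorm_nonneg {p : ℕ} (v : Fin p → ℝ) : 0 ≤ eNorm v := norm_nonneg _

lemma sNorm_nonneg {p q : ℕ} (A : Matrix (Fin p) (Fin q) ℝ) : 0 ≤ sNorm A := norm_nonneg _

lemma eNorm_mulVec_le {p q : ℕ} (A : Matrix (Fin p) (Fin q) ℝ) (v : Fin q → ℝ) :
    eNorm (A *ᵥ v) ≤ sNorm A * eNorm v :=
  A.l2_opNorm_mulVec ((WithLp.equiv 2 _).symm v)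

lemma eNorm_neg {p : ℕ} (v : Fin p → ℝ) : eNorm (-v) = eNorm v := by
  show ‖-((WithLp.equiv 2 (Fin p → ℝ)).symm v)‖ = _
  rw [norm_neg]; rfl

lemma eNorm_add_le {p : ℕ} (v w : Fin p → ℝ) : eNorm (v + w) ≤ eNorm v + eNorm w := by
  show ‖((WithLp.equiv 2 (Fin p → ℝ)).symm v) + ((WithLp.equiv 2 (Fin p → ℝ)).symm w)‖ ≤ _
  exact norm_add_le _ _

lemma eNorm_smul {p : ℕ} (c : ℝ) (v : Fin p → ℝ) : eNorm (c • v) = |c| * eNorm v := by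
  show ‖c • ((WithLp.equiv 2 (Fin p → ℝ)).symm v)‖ = _
  rw [norm_smul]; rfl

lemma sNorm_mul_le {p q r : ℕ} (A : Matrix (Fin p) (Fin q) ℝ) (B : Matrix (Fin q) (Fin r) ℝ) :
    sNorm (A * B) ≤ sNorm A * sNorm B := A.l2_opNorm_mul B

lemma sNorm_add_le {p q : ℕ} (A B : Matrix (Fin p) (Fin q) ℝ) :
    sNorm (A + B) ≤ sNorm A + sNorm B := norm_add_le A B

lemma sNorm_smul {p q : ℕ} (c : ℝ) (A : Matrix (Fin p) (Fin q) ℝ) :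
    sNorm (c • A) = |c| * sNorm A := by
  simp [sNorm_eq, norm_smul]

lemma sNorm_transpose {p q : ℕ} (A : Matrix (Fin p) (Fin q) ℝ) : sNorm Aᵀ = sNorm A := by
  rw [← Matrix.conjTranspose_eq_transpose_of_trivial]
  exact A.l2_opNorm_conjTranspose

lemma sNorm_one_le {p : ℕ} : sNorm (1 : Matrix (Fin p) (Fin p) ℝ) ≤ 1 := by
  rw [sNorm_eq, Matrix.cstar_norm_def, _root_.map_one]
  exact ContinuousLinearMap.norm_id_le

lemma sNorm_le_bound {p q : ℕ} (A : Matrix (Fin p) (Fin q) ℝ) (c : ℝ) (hc : 0 ≤ c)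
    (h : ∀ v, eNorm (A *ᵥ v) ≤ c * eNorm v) : sNorm A ≤ c :=
  ContinuousLinearMap.opNorm_le_bound _ hc fun x => h x

lemma dot_eq_inner {p : ℕ} (v w : Fin p → ℝ) :
    v ⬝ᵥ w = inner ℝ ((WithLp.equiv 2 (Fin p → ℝ)).symm v) ((WithLp.equiv 2 (Fin p → ℝ)).symm w) := by
  simp [dotProduct, PiLp.inner_apply, RCLike.inner_apply, mul_comm]

lemma dot_le_eNorm {p : ℕ} (v w : Fin p → ℝ) : v ⬝ᵥ w ≤ eNorm v * eNorm w := by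
  rw [dot_eq_inner]; exact real_inner_le_norm _ _

lemma dot_self_eq {p : ℕ} (v : Fin p → ℝ) : v ⬝ᵥ v = eNorm v ^ 2 := by
  rw [dot_eq_inner]; exact real_inner_self_eq_norm_sq _

lemma psd_smul_real {q : ℕ} {S : Matrix (Fin q) (Fin q) ℝ} (hS : S.PosSemidef) {c : ℝ}
    (hc : 0 ≤ c) : (c • S).PosSemidef := by
  refine Matrix.PosSemidef.of_dotProduct_mulVec_nonneg ?_ fun x => ?_
  · unfold Matrix.IsHermitian
    rw [conjTranspose_smul, hS.1]
    simp
  · rw [smul_mulVec, dotProduct_smul, smul_eq_mul]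
    exact mul_nonneg hc (hS.dotProduct_mulVec_nonneg x)

lemma psd_dot_factor {q : ℕ} {S : Matrix (Fin q) (Fin q) ℝ} (hS : S.PosSemidef)
    (a b : Fin q → ℝ) : a ⬝ᵥ (S *ᵥ b) = (hS.sqrt *ᵥ a) ⬝ᵥ (hS.sqrt *ᵥ b) := by
  have h2 : hS.sqrtᵀ = hS.sqrt := by
    rw [← Matrix.conjTranspose_eq_transpose_of_trivial]
    exact hS.posSemidef_sqrt.1
  have h3 : S *ᵥ b = hS.sqrt *ᵥ (hS.sqrt *ᵥ b) := by
    rw [mulVec_mulVec, hS.sqrt_mul_self]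
  rw [h3, dotProduct_mulVec, ← mulVec_transpose, h2]

lemma psd_cs {q : ℕ} {S : Matrix (Fin q) (Fin q) ℝ} (hS : S.PosSemidef) (a b : Fin q → ℝ) :
    a ⬝ᵥ (S *ᵥ b) ≤ eNorm (hS.sqrt *ᵥ a) * eNorm (hS.sqrt *ᵥ b) := by
  rw [psd_dot_factor hS]; exact dot_le_eNorm _ _

lemma psd_dot_sq {q : ℕ} {S : Matrix (Fin q) (Fin q) ℝ} (hS : S.PosSemidef) (a : Fin q → ℝ) :
    a ⬝ᵥ (S *ᵥ a) = eNorm (hS.sqrt *ᵥ a) ^ 2 := by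
  rw [psd_dot_factor hS, dot_self_eq]

lemma key_claim {q : ℕ} {R : Matrix (Fin q) (Fin q) ℝ} (hR : R.PosDef) (y : Fin q → ℝ) :
    eNorm y ^ 2 ≤ sNorm R⁻¹ * (y ⬝ᵥ (R *ᵥ y)) := by
  have P : R.PosSemidef := hR.posSemidef
  by_cases hy : eNorm y = 0
  · rw [hy]
    have := P.dotProduct_mulVec_nonneg y
    simp only [star_trivial] at this
    nlinarith [mul_nonneg (sNorm_nonneg R⁻¹) this]
  have hy0 : 0 < eNorm y := lt_of_le_of_ne (eNorm_nonneg y) (Ne.symm hy)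
  have hRu : IsUnit R.det := hR.det_pos.ne'.isUnit
  have hyz : R *ᵥ (R⁻¹ *ᵥ y) = y := by
    rw [mulVec_mulVec, mul_nonsing_inv _ hRu, one_mulVec]
  have h4 : eNorm y ^ 2 ≤ eNorm (P.sqrt *ᵥ y) * eNorm (P.sqrt *ᵥ (R⁻¹ *ᵥ y)) := by
    calc eNorm y ^ 2 = y ⬝ᵥ y := (dot_self_eq y).symm
      _ = y ⬝ᵥ (R *ᵥ (R⁻¹ *ᵥ y)) := by rw [hyz]
      _ ≤ _ := psd_cs P y _
  have h5 : eNorm (P.sqrt *ᵥ (R⁻¹ *ᵥ y)) ^ 2 ≤ sNorm R⁻¹ * eNorm y ^ 2 := by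
    calc eNorm (P.sqrt *ᵥ (R⁻¹ *ᵥ y)) ^ 2 = (R⁻¹ *ᵥ y) ⬝ᵥ (R *ᵥ (R⁻¹ *ᵥ y)) :=
          (psd_dot_sq P _).symm
      _ = (R⁻¹ *ᵥ y) ⬝ᵥ y := by rw [hyz]
      _ ≤ eNorm (R⁻¹ *ᵥ y) * eNorm y := dot_le_eNorm _ _
      _ ≤ (sNorm R⁻¹ * eNorm y) * eNorm y :=
          mul_le_mul_of_nonneg_right (eNorm_mulVec_le _ _) (eNorm_nonneg y)
      _ = sNorm R⁻¹ * eNorm y ^ 2 := by ring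
  have hα2 : y ⬝ᵥ (R *ᵥ y) = eNorm (P.sqrt *ᵥ y) ^ 2 := psd_dot_sq P y
  rw [hα2]
  set α := eNorm (P.sqrt *ᵥ y) with hα
  set β := eNorm (P.sqrt *ᵥ (R⁻¹ *ᵥ y)) with hβ
  have hαn : 0 ≤ α := eNorm_nonneg _
  have hβn : 0 ≤ β := eNorm_nonneg _
  have hA : eNorm y ^ 2 * eNorm y ^ 2 ≤ (α * β) * (α * β) :=
    mul_le_mul h4 h4 (sq_nonneg _) (mul_nonneg hαn hβn)
  have hB : α ^ 2 * β ^ 2 ≤ α ^ 2 * (sNorm R⁻¹ * eNorm y ^ 2) :=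
    mul_le_mul_of_nonneg_left h5 (sq_nonneg α)
  have hey2 : 0 < eNorm y ^ 2 := by positivity
  rw [← mul_le_mul_iff_of_pos_right hey2]
  nlinarith [hA, hB]

lemma key_inv_bound {q : ℕ} {R S : Matrix (Fin q) (Fin q) ℝ}
    (hR : R.PosDef) (hS : S.PosSemidef) : sNorm (R + S)⁻¹ ≤ sNorm R⁻¹ := by
  have hQ : (R + S).PosDef := hR.add_posSemidef hS
  have hQd : IsUnit (R + S).det := hQ.det_pos.ne'.isUnit
  refine sNorm_le_bound _ _ (sNorm_nonneg _) fun v => ?_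
  set y := (R + S)⁻¹ *ᵥ v with hy
  have hxv : (R + S) *ᵥ y = v := by
    rw [hy, mulVec_mulVec, mul_nonsing_inv _ hQd, one_mulVec]
  by_cases hy0 : eNorm y = 0
  · rw [hy0]
    exact mul_nonneg (sNorm_nonneg _) (eNorm_nonneg _)
  have hyp : 0 < eNorm y := lt_of_le_of_ne (eNorm_nonneg y) (Ne.symm hy0)
  have h1 : eNorm y ^ 2 ≤ sNorm R⁻¹ * (y ⬝ᵥ (R *ᵥ y)) := key_claim hR y
  have h2 : y ⬝ᵥ (R *ᵥ y) ≤ y ⬝ᵥ v := by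
    rw [← hxv, add_mulVec, dotProduct_add]
    have := hS.dotProduct_mulVec_nonneg y
    simp only [star_trivial] at this
    linarith
  have h3 : y ⬝ᵥ v ≤ eNorm y * eNorm v := dot_le_eNorm _ _
  have hs : 0 ≤ sNorm R⁻¹ := sNorm_nonneg _
  show eNorm y ≤ sNorm R⁻¹ * eNorm v
  nlinarith [mul_le_mul_of_nonneg_left h2 hs, mul_le_mul_of_nonneg_left h3 hs]

theorem stmt11 (T M : ℝ) (hT : 0 < T) (hM : 0 < M) :
    ∃ C : ℝ, ∀ (n m N : ℕ), 0 < N →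
      ∀ (At : ℕ → Matrix (Fin n) (Fin n) ℝ) (Bt : Matrix (Fin n) (Fin m) ℝ)
        (Rt : ℕ → Matrix (Fin m) (Fin m) ℝ) (Pi : ℕ → Matrix (Fin n) (Fin n) ℝ),
      (∀ k < N, sNorm (At k) ≤ M) → sNorm Bt ≤ M →
      (∀ k < N, (Rt k).PosDef) → (∀ k < N, sNorm ((Rt k)⁻¹) ≤ M) →
      (∀ k, 1 ≤ k → k ≤ N → (Pi k).PosSemidef) →
      (∀ k, 1 ≤ k → k ≤ N → sNorm (Pi k) ≤ M) →
      ∀ l < N, ∀ (xl : Fin n → ℝ) (x : ℕ → Fin n → ℝ) (u : ℕ → Fin m → ℝ),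
        x l = xl →
        (∀ k, l ≤ k → k < N →
          u k = -(((Rt k + (T / (N : ℝ)) • (Btᵀ * Pi (k + 1) * Bt))⁻¹
              * (Btᵀ * Pi (k + 1) * (1 + (T / (N : ℝ)) • At k))) *ᵥ x k)) →
        (∀ k, l ≤ k → k < N →
          x (k + 1) = (1 + (T / (N : ℝ)) • At k) *ᵥ x k + (T / (N : ℝ)) • (Bt *ᵥ u k)) →
        ∀ k, l ≤ k → k ≤ N → ∀ j, l ≤ j → j < N →
          eNorm (x k) + eNorm (u j) ≤ C * eNorm xl := by
  set Cu : ℝ := M * M * M * (1 + T * M) with hCudef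
  have hCu : 0 < Cu := by positivity
  set a : ℝ := M * (1 + Cu) with hadef
  have ha : 0 < a := by positivity
  set E : ℝ := Real.exp (T * a) with hEdef
  refine ⟨(1 + Cu) * E, ?_⟩
  intro n m N hN At Bt Rt Pi hA hB hR hRinv hPi hPin l hlN xl x u hxl hu hx k hkl hkN j hjl hjN
  set τ : ℝ := T / N with hτdef
  have hNpos : (0 : ℝ) < N := by exact_mod_cast hN
  have hτ0 : 0 < τ := div_pos hT hNpos
  have hτT : τ ≤ T := div_le_self hT.le (by exact_mod_cast hN)
  -- gain bound
  have hgain : ∀ i, l ≤ i → i < N → eNorm (u i) ≤ Cu * eNorm (x i) := by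
    intro i hil hiN
    rw [hu i hil hiN, eNorm_neg]
    have hpi : (Pi (i + 1)).PosSemidef := hPi (i + 1) (Nat.le_add_left 1 i) hiN
    have hpin : sNorm (Pi (i + 1)) ≤ M := hPin (i + 1) (Nat.le_add_left 1 i) hiN
    have hpsd : (τ • (Btᵀ * Pi (i + 1) * Bt)).PosSemidef := by
      apply psd_smul_real _ hτ0.le
      have := hpi.conjTranspose_mul_mul_same Bt
      rwa [Matrix.conjTranspose_eq_transpose_of_trivial] at this
    have hQinv : sNorm (Rt i + τ • (Btᵀ * Pi (i + 1) * Bt))⁻¹ ≤ M :=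
      le_trans (key_inv_bound (hR i hiN) hpsd) (hRinv i hiN)
    have hI : sNorm (1 + τ • At i) ≤ 1 + T * M := by
      calc sNorm (1 + τ • At i) ≤ sNorm 1 + sNorm (τ • At i) := sNorm_add_le _ _
        _ ≤ 1 + τ * M := by
            have h1 := sNorm_one_le (p := n)
            have h2 : sNorm (τ • At i) = |τ| * sNorm (At i) := sNorm_smul _ _
            rw [abs_of_pos hτ0] at h2
            have h3 : τ * sNorm (At i) ≤ τ * M :=
              mul_le_mul_of_nonneg_left (hA i hiN) hτ0.le
            linarith
        _ ≤ 1 + T * M := by nlinarith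
    have hBT : sNorm Btᵀ ≤ M := by rw [sNorm_transpose]; exact hB
    have hG : sNorm ((Rt i + τ • (Btᵀ * Pi (i + 1) * Bt))⁻¹
        * (Btᵀ * Pi (i + 1) * (1 + τ • At i))) ≤ Cu := by
      calc sNorm _ ≤ sNorm (Rt i + τ • (Btᵀ * Pi (i + 1) * Bt))⁻¹
            * sNorm (Btᵀ * Pi (i + 1) * (1 + τ • At i)) := sNorm_mul_le _ _
        _ ≤ M * (M * M * (1 + T * M)) := by
            have c1 : sNorm (Btᵀ * Pi (i + 1) * (1 + τ • At i)) ≤ M * M * (1 + T * M) := by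
              calc sNorm (Btᵀ * Pi (i + 1) * (1 + τ • At i))
                  ≤ sNorm (Btᵀ * Pi (i + 1)) * sNorm (1 + τ • At i) := sNorm_mul_le _ _
                _ ≤ (M * M) * (1 + T * M) := by
                    have c2 : sNorm (Btᵀ * Pi (i + 1)) ≤ M * M := by
                      calc sNorm (Btᵀ * Pi (i + 1)) ≤ sNorm Btᵀ * sNorm (Pi (i + 1)) :=
                            sNorm_mul_le _ _
                        _ ≤ M * M := mul_le_mul hBT hpin (sNorm_nonneg _) hM.le
                    have hnn : (0:ℝ) ≤ 1 + T * M := by positivity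
                    exact mul_le_mul c2 hI (sNorm_nonneg _) (by positivity)
            exact mul_le_mul hQinv c1 (sNorm_nonneg _) hM.le
        _ = Cu := by rw [hCudef]; ring
    calc eNorm (_ *ᵥ x i) ≤ sNorm _ * eNorm (x i) := eNorm_mulVec_le _ _
      _ ≤ Cu * eNorm (x i) := mul_le_mul_of_nonneg_right hG (eNorm_nonneg _)
  -- one-step growth
  have hstep : ∀ i, l ≤ i → i < N → eNorm (x (i + 1)) ≤ (1 + τ * a) * eNorm (x i) := by
    intro i hil hiN
    rw [hx i hil hiN]
    have hI : sNorm (1 + τ • At i) ≤ 1 + τ * M := by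
      calc sNorm (1 + τ • At i) ≤ sNorm 1 + sNorm (τ • At i) := sNorm_add_le _ _
        _ ≤ 1 + τ * M := by
            have h1 := sNorm_one_le (p := n)
            have h2 : sNorm (τ • At i) = |τ| * sNorm (At i) := sNorm_smul _ _
            rw [abs_of_pos hτ0] at h2
            have h3 : τ * sNorm (At i) ≤ τ * M :=
              mul_le_mul_of_nonneg_left (hA i hiN) hτ0.le
            linarith
    have hu' := hgain i hil hiN
    have e1 : eNorm ((1 + τ • At i) *ᵥ x i) ≤ (1 + τ * M) * eNorm (x i) :=
      le_trans (eNorm_mulVec_le _ _) (mul_le_mul_of_nonneg_right hI (eNorm_nonneg _))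
    have e2 : eNorm (τ • (Bt *ᵥ u i)) ≤ τ * (M * (Cu * eNorm (x i))) := by
      rw [eNorm_smul, abs_of_pos hτ0]
      apply mul_le_mul_of_nonneg_left _ hτ0.le
      calc eNorm (Bt *ᵥ u i) ≤ sNorm Bt * eNorm (u i) := eNorm_mulVec_le _ _
        _ ≤ M * (Cu * eNorm (x i)) := mul_le_mul hB hu' (eNorm_nonneg _) hM.le
    calc eNorm ((1 + τ • At i) *ᵥ x i + τ • (Bt *ᵥ u i))
        ≤ eNorm ((1 + τ • At i) *ᵥ x i) + eNorm (τ • (Bt *ᵥ u i)) := eNorm_add_le _ _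
      _ ≤ (1 + τ * M) * eNorm (x i) + τ * (M * (Cu * eNorm (x i))) := add_le_add e1 e2
      _ = (1 + τ * a) * eNorm (x i) := by rw [hadef]; ring
  -- induction
  have hone : (1:ℝ) ≤ 1 + τ * a := by nlinarith
  have hind : ∀ i, l ≤ i → i ≤ N → eNorm (x i) ≤ (1 + τ * a) ^ (i - l) * eNorm xl := by
    intro i hil
    induction i, hil using Nat.le_induction with
    | base => intro _; rw [hxl]; simp
    | succ i hil ih =>
      intro hiN
      have hiN' : i < N := hiN
      have h1 := hstep i hil hiN'
      have h2 := ih (le_of_lt hiN')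
      have hpow : (1 + τ * a) ^ (i + 1 - l) = (1 + τ * a) * (1 + τ * a) ^ (i - l) := by
        rw [Nat.succ_sub hil, pow_succ]; ring
      calc eNorm (x (i + 1)) ≤ (1 + τ * a) * eNorm (x i) := h1
        _ ≤ (1 + τ * a) * ((1 + τ * a) ^ (i - l) * eNorm xl) :=
            mul_le_mul_of_nonneg_left h2 (by linarith)
        _ = (1 + τ * a) ^ (i + 1 - l) * eNorm xl := by rw [hpow]; ring
  -- pow bound
  have hpowE : ∀ i, l ≤ i → i ≤ N → (1 + τ * a) ^ (i - l) ≤ E := by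
    intro i hil hiN
    have h1 : (1 + τ * a) ≤ Real.exp (τ * a) := by
      have := Real.add_one_le_exp (τ * a); linarith
    calc (1 + τ * a) ^ (i - l) ≤ Real.exp (τ * a) ^ (i - l) :=
          pow_le_pow_left₀ (by linarith) h1 _
      _ = Real.exp ((i - l : ℕ) * (τ * a)) := by rw [← Real.exp_nat_mul]
      _ ≤ E := by
          rw [hEdef, Real.exp_le_exp]
          have hil' : ((i - l : ℕ) : ℝ) ≤ N := by
            have : i - l ≤ N := le_trans (Nat.sub_le i l) hiN
            exact_mod_cast this
          have : ((i - l : ℕ) : ℝ) * τ ≤ N * τ := mul_le_mul_of_nonneg_right hil' hτ0.le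
          have hNτ : (N : ℝ) * τ = T := by
            rw [hτdef]; field_simp
          nlinarith
  have hEpos : 0 < E := Real.exp_pos _
  have hxk : eNorm (x k) ≤ E * eNorm xl := by
    calc eNorm (x k) ≤ (1 + τ * a) ^ (k - l) * eNorm xl := hind k hkl hkN
      _ ≤ E * eNorm xl := by
          have hxlnn : 0 ≤ eNorm xl := eNorm_nonneg _
          exact mul_le_mul_of_nonneg_right (hpowE k hkl hkN) hxlnn
  have hxj : eNorm (x j) ≤ E * eNorm xl := by
    have hjN' : j ≤ N := le_of_lt hjN
    calc eNorm (x j) ≤ (1 + τ * a) ^ (j - l) * eNorm xl := hind j hjl hjN'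
      _ ≤ E * eNorm xl :=
          mul_le_mul_of_nonneg_right (hpowE j hjl hjN') (eNorm_nonneg _)
  have huj : eNorm (u j) ≤ Cu * (E * eNorm xl) :=
    le_trans (hgain j hjl hjN) (mul_le_mul_of_nonneg_left hxj hCu.le)
  nlinarith [hxk, huj]
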